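/- Let k ≥ 1 be an integer. The function u ↦ ∏_{j=0}^{k} (j+u)/(k+j+3u) is strictly increasing on (0, ∞); that is, for all real numbers 0 < u₁ < u₂ one has ∏_{j=0}^{k} (j+u₁)/(k+j+3u₁) < ∏_{j=0}^{k} (j+u₂)/(k+j+3u₂). Moreover, for every u > 0 this product equals 3^{−(k+1)} · √(∏_{j=0}^{k} (1 − 2(k−2j)²/((k+j)(2k−j) + 9ku + 9u²))). -/

import Mathlib

/-!
Pairing the factor of index `j` with that of index `k - j` gives
`(j+u)/(k+j+3u) · (k-j+u)/(2k-j+3u) = (1 - 2(k-2j)²/D_j(u)) / 9`, where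
`D_j(u) = (k+j)(2k-j) + 9ku + 9u² = (k+j+3u)(2k-j+3u)`.
So the square of the product is `9^{-(k+1)}` times the product of these paired factors.
Each `D_j` increases with `u`, so each paired factor is nondecreasing, and the one with `j = 0`
is strictly increasing as soon as `k ≥ 1`.
-/

open Finset

lemma sq_prod_range_eq_prod_mul_reflect {M : Type*} [CommMonoid M] (f : ℕ → M) (n : ℕ) :
    (∏ j ∈ range n, f j) ^ 2 = ∏ j ∈ range n, f j * f (n - 1 - j) := by
  rw [prod_mul_distrib, prod_range_reflect, sq]

noncomputable section

def pairDenom (k x u : ℝ) : ℝ := (k + x) * (2 * k - x) + 9 * k * u + 9 * u ^ 2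

def pairFactor (k x u : ℝ) : ℝ := 1 - 2 * (k - 2 * x) ^ 2 / pairDenom k x u

def ratioProd (k : ℕ) (u : ℝ) : ℝ :=
  ∏ j ∈ range (k + 1), ((j : ℝ) + u) / ((k : ℝ) + (j : ℝ) + 3 * u)

def pairFactorProd (k : ℕ) (u : ℝ) : ℝ := ∏ j ∈ range (k + 1), pairFactor k j u

end

section PairFactor

variable {k x u : ℝ}

lemma pairDenom_eq_mul (k x u : ℝ) :
    pairDenom k x u = (k + x + 3 * u) * (2 * k - x + 3 * u) := by
  rw [pairDenom]; ring

lemma pairDenom_pos (hx : 0 ≤ x) (hxk : x ≤ k) (hu : 0 < u) : 0 < pairDenom k x u := by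
  rw [pairDenom_eq_mul]
  apply mul_pos <;> linarith

lemma pairDenom_lt_pairDenom {u₁ u₂ : ℝ} (hk : 0 ≤ k) (hu₁ : 0 < u₁) (h : u₁ < u₂) :
    pairDenom k x u₁ < pairDenom k x u₂ := by
  rw [pairDenom, pairDenom]
  nlinarith

lemma div_mul_div_reflect_eq_pairFactor (h₁ : k + x + 3 * u ≠ 0) (h₂ : 2 * k - x + 3 * u ≠ 0) :
    (x + u) / (k + x + 3 * u) * ((k - x + u) / (k + (k - x) + 3 * u)) =
      pairFactor k x u / 9 := by
  have h₂' : k + (k - x) + 3 * u = 2 * k - x + 3 * u := by ring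
  rw [h₂', div_mul_div_comm, pairFactor, pairDenom_eq_mul, one_sub_div (mul_ne_zero h₁ h₂),
    div_div, div_eq_div_iff (mul_ne_zero h₁ h₂) (mul_ne_zero (mul_ne_zero h₁ h₂) (by norm_num))]
  ring

lemma pairFactor_pos (hx : 0 ≤ x) (hxk : x ≤ k) (hu : 0 < u) : 0 < pairFactor k x u := by
  have hgap : pairDenom k x u - 2 * (k - 2 * x) ^ 2 = 9 * ((x + u) * (k - x + u)) := by
    rw [pairDenom]; ring
  have : 0 < (x + u) * (k - x + u) := mul_pos (by linarith) (by linarith)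
  rw [pairFactor, sub_pos, div_lt_one (pairDenom_pos hx hxk hu)]
  linarith

lemma pairFactor_le_pairFactor {u₁ u₂ : ℝ} (hx : 0 ≤ x) (hxk : x ≤ k) (hu₁ : 0 < u₁)
    (h : u₁ < u₂) : pairFactor k x u₁ ≤ pairFactor k x u₂ := by
  unfold pairFactor
  gcongr
  · exact pairDenom_pos hx hxk hu₁
  · exact (pairDenom_lt_pairDenom (hx.trans hxk) hu₁ h).le

lemma pairFactor_lt_pairFactor {u₁ u₂ : ℝ} (hx : 0 ≤ x) (hxk : x ≤ k) (hkx : k ≠ 2 * x)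
    (hu₁ : 0 < u₁) (h : u₁ < u₂) : pairFactor k x u₁ < pairFactor k x u₂ := by
  have hc : 0 < 2 * (k - 2 * x) ^ 2 := by
    have : k - 2 * x ≠ 0 := sub_ne_zero.mpr hkx
    positivity
  unfold pairFactor
  gcongr 1 - ?_
  exact div_lt_div_of_pos_left hc (pairDenom_pos hx hxk hu₁)
    (pairDenom_lt_pairDenom (hx.trans hxk) hu₁ h)

end PairFactor

section Products

variable {k : ℕ} {u : ℝ}

lemma ratioProd_pos (hu : 0 < u) : 0 < ratioProd k u :=
  prod_pos fun _ _ => by positivity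

lemma sq_ratioProd (hu : 0 < u) :
    ratioProd k u ^ 2 = ((3 : ℝ) ^ (k + 1))⁻¹ ^ 2 * pairFactorProd k u := by
  have hnine : ((3 : ℝ) ^ (k + 1))⁻¹ ^ 2 = ∏ _j ∈ range (k + 1), (9 : ℝ)⁻¹ := by
    rw [prod_const, card_range, ← inv_pow, ← pow_mul, mul_comm, pow_mul]
    norm_num
  rw [ratioProd, sq_prod_range_eq_prod_mul_reflect, pairFactorProd, hnine, ← prod_mul_distrib]
  refine prod_congr rfl fun j hj => ?_
  have hjk : (j : ℝ) ≤ k := Nat.cast_le.mpr (mem_range_succ_iff.mp hj)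
  have hj₀ : (0 : ℝ) ≤ j := j.cast_nonneg
  rw [Nat.add_sub_cancel, Nat.cast_sub (mem_range_succ_iff.mp hj),
    div_mul_div_reflect_eq_pairFactor (by linarith) (by linarith), div_eq_inv_mul]

lemma ratioProd_eq_sqrt (hu : 0 < u) :
    ratioProd k u = ((3 : ℝ) ^ (k + 1))⁻¹ * √(pairFactorProd k u) := by
  rw [← Real.sqrt_sq (ratioProd_pos hu).le, sq_ratioProd hu, Real.sqrt_mul (sq_nonneg _),
    Real.sqrt_sq (by positivity)]

lemma pairFactorProd_lt_pairFactorProd (hk : 1 ≤ k) {u₁ u₂ : ℝ} (hu₁ : 0 < u₁) (h : u₁ < u₂) :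
    pairFactorProd k u₁ < pairFactorProd k u₂ := by
  have hk₀ : (k : ℝ) ≠ 2 * ((0 : ℕ) : ℝ) := by
    simpa using Nat.one_le_iff_ne_zero.mp hk
  refine prod_lt_prod (fun j hj => ?_) (fun j hj => ?_) ⟨0, by simp, ?_⟩
  · exact pairFactor_pos j.cast_nonneg (Nat.cast_le.mpr (mem_range_succ_iff.mp hj)) hu₁
  · exact pairFactor_le_pairFactor j.cast_nonneg
      (Nat.cast_le.mpr (mem_range_succ_iff.mp hj)) hu₁ h
  · exact pairFactor_lt_pairFactor (by simp) (by simp) hk₀ hu₁ h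

lemma ratioProd_lt_ratioProd (hk : 1 ≤ k) {u₁ u₂ : ℝ} (hu₁ : 0 < u₁) (h : u₁ < u₂) :
    ratioProd k u₁ < ratioProd k u₂ := by
  refine lt_of_pow_lt_pow_left₀ 2 (ratioProd_pos (hu₁.trans h)).le ?_
  rw [sq_ratioProd hu₁, sq_ratioProd (hu₁.trans h)]
  gcongr
  exact pairFactorProd_lt_pairFactorProd hk hu₁ h

end Products

theorem product_monotone_and_identity (k : ℕ) (hk : 1 ≤ k) :
    (∀ u₁ u₂ : ℝ, 0 < u₁ → u₁ < u₂ →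
      (∏ j ∈ Finset.range (k + 1), ((j : ℝ) + u₁) / ((k : ℝ) + (j : ℝ) + 3 * u₁)) <
      (∏ j ∈ Finset.range (k + 1), ((j : ℝ) + u₂) / ((k : ℝ) + (j : ℝ) + 3 * u₂))) ∧
    (∀ u : ℝ, 0 < u →
      (∏ j ∈ Finset.range (k + 1), ((j : ℝ) + u) / ((k : ℝ) + (j : ℝ) + 3 * u)) =
        ((3 : ℝ) ^ (k + 1))⁻¹ * Real.sqrt (∏ j ∈ Finset.range (k + 1),
          (1 - 2 * ((k : ℝ) - 2 * (j : ℝ)) ^ 2 /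
            (((k : ℝ) + (j : ℝ)) * (2 * (k : ℝ) - (j : ℝ)) + 9 * (k : ℝ) * u + 9 * u ^ 2)))) :=
  ⟨fun _ _ hu₁ h => ratioProd_lt_ratioProd hk hu₁ h, fun _ hu => ratioProd_eq_sqrt hu⟩
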